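/- Let G=(V,E) be a connected simple graph not isomorphic to a star, let k be an integer with 1 ≤ k < |V|−1, and let G'=(V',E') = β(G,k). Then there exists S with L ∪ M ⊊ S ⊊ V' such that G'[S] is a proportionally dense subgraph if and only if G has an independent set of size at least k. -/

import Mathlib

open SimpleGraph

/-- Number of neighbors of `v` inside `T`. -/
noncomputable def degIn {W : Type*} (G : SimpleGraph W) (T : Set W) (v : W) : ℕ :=
  (T ∩ G.neighborSet v).ncard

/-- `G[S]` is a proportionally dense subgraph. -/
def IsPDS {W : Type*} (G : SimpleGraph W) (S : Set W) : Prop :=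
  S ⊂ Set.univ ∧ 2 ≤ S.ncard ∧
    ∀ u ∈ S, degIn G Sᶜ u * (S.ncard - 1) ≤ degIn G S u * Sᶜ.ncard

/-- A star is a complete bipartite graph `K_{1,ℓ}`, `ℓ ≥ 1`. -/
def IsStar {V : Type*} (G : SimpleGraph V) : Prop :=
  ∃ ℓ : ℕ, 1 ≤ ℓ ∧ Nonempty (G ≃g completeBipartiteGraph Unit (Fin ℓ))

/-- The number `|L| = |M| ⬝ (|V| - k - 1) - k + 1` of extra vertices in `β(G,k)`. -/
noncomputable def lsize {V : Type*} [Fintype V] (G : SimpleGraph V) (k : ℕ) : ℕ :=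
  G.edgeSet.ncard * (Fintype.card V - k - 1) - k + 1

/-- Vertex type of the bipartite graph `β(G,k)`: `L` (the `Fin` part), `M` (edge
vertices), and `N = V`. -/
abbrev BetaVert (V : Type*) [Fintype V] (G : SimpleGraph V) (k : ℕ) : Type _ :=
  (Fin (lsize G k) ⊕ ↥G.edgeSet) ⊕ V

/-- The bipartite graph `β(G,k)`: every vertex of `M` is adjacent to every vertex
of `L`, and a vertex `e ∈ M` is adjacent to `u ∈ N` iff `u` is not an endpoint
of the edge `e` of `G`; there are no other edges. -/
def betaGraph {V : Type*} [Fintype V] (G : SimpleGraph V) (k : ℕ) :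
    SimpleGraph (BetaVert V G k) where
  Adj x y :=
    match x, y with
    | Sum.inl (Sum.inl _), Sum.inl (Sum.inr _) => True
    | Sum.inl (Sum.inr _), Sum.inl (Sum.inl _) => True
    | Sum.inl (Sum.inr e), Sum.inr u => u ∉ (e : Sym2 V)
    | Sum.inr u, Sum.inl (Sum.inr e) => u ∉ (e : Sym2 V)
    | _, _ => False
  symm := by
    constructor
    rintro ((a | e) | u) ((b | f) | v) h <;> simp_all
  loopless := by
    constructor
    rintro ((a | e) | u) h <;> simp_all

/-- The set `L ∪ M` in `β(G,k)`. -/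
def betaLM {V : Type*} [Fintype V] (G : SimpleGraph V) (k : ℕ) : Set (BetaVert V G k) :=
  Set.range Sum.inl

/-- The set `M` of edge-vertices in `β(G,k)`. -/
def betaM {V : Type*} [Fintype V] (G : SimpleGraph V) (k : ℕ) : Set (BetaVert V G k) :=
  Set.range (fun e : ↥G.edgeSet => Sum.inl (Sum.inr e))

/-!
Every vertex of `β(G,k)` outside `M` has all its neighbours in `M`, so for `L ∪ M ⊆ S` the PDS
condition only has to be checked at the edge-vertices. Write `S = L ∪ M ∪ A` with `A ⊆ V`,
`n = |V|`, `m = |E|`, `a = |A|`, and `t = |{x, y} ∩ A|` for an edge `xy`. The choice of `|L|`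
turns the condition at `xy` into `(n - a)(m + t - 1) ≤ (2 - t)(m(n - k) + a - k)`.
It fails for `t = 2`, so `A` is independent; for `t = 1` it says `a ≥ k`, and such an edge exists
because `G` is connected and `∅ ≠ A ≠ V`. Conversely an independent `A` with `a = k` has
`t ≤ 1` on every edge, and then the inequality holds.
-/

theorem Set.ncard_eq_ncard_preimage_inl_add_ncard_preimage_inr {α β : Type*}
    (s : Set (α ⊕ β)) (hs : s.Finite := by toFinite_tac) :
    s.ncard = (Sum.inl ⁻¹' s).ncard + (Sum.inr ⁻¹' s).ncard := by
  conv_lhs => rw [← Set.image_preimage_inl_union_image_preimage_inr s]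
  rw [Set.ncard_union_eq Set.disjoint_image_inl_image_inr
      (hs.subset (Set.image_preimage_subset _ _)) (hs.subset (Set.image_preimage_subset _ _)),
    Set.ncard_image_of_injective _ Sum.inl_injective,
    Set.ncard_image_of_injective _ Sum.inr_injective]

lemma SimpleGraph.Connected.card_le_ncard_edgeSet_add_one {V : Type*} [Fintype V]
    {G : SimpleGraph V} (hconn : G.Connected) : Fintype.card V ≤ G.edgeSet.ncard + 1 := by
  simpa [Nat.card_eq_fintype_card, Nat.card_coe_set_eq] using
    hconn.card_vert_le_card_edgeSet_add_one

lemma pds_edge_inequality_iff {n m k a c t t' ℓ p q : ℤ} (hℓ : ℓ = m * (n - k - 1) - k + 1)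
    (hp : t + p = a) (hq : t' + q = c) (ht : t + t' = 2) (hc : a + c = n) :
    q * (ℓ + m + a - 1) ≤ (ℓ + p) * c ↔
      (n - a) * (m + t - 1) ≤ (2 - t) * (m * (n - k) + a - k) := by
  obtain rfl : p = a - t := by linarith
  obtain rfl : q = c - 2 + t := by linarith
  obtain rfl : n = a + c := hc.symm
  subst hℓ
  constructor <;> intro h <;> linarith

section BetaGraph

variable {V : Type*} [Fintype V] {G : SimpleGraph V} {k : ℕ}

lemma cast_lsize (hconn : G.Connected) (hk : k < Fintype.card V - 1) :
    (lsize G k : ℤ) = G.edgeSet.ncard * (Fintype.card V - k - 1) - k + 1 := by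
  have hm := hconn.card_le_ncard_edgeSet_add_one
  have hkm : k ≤ G.edgeSet.ncard * (Fintype.card V - k - 1) :=
    (by omega : k ≤ G.edgeSet.ncard).trans (Nat.le_mul_of_pos_right _ (by omega))
  have hn : ((Fintype.card V - k - 1 : ℕ) : ℤ) = Fintype.card V - k - 1 := by omega
  rw [lsize, Nat.cast_add, Nat.cast_sub hkm, Nat.cast_mul, hn, Nat.cast_one]

lemma betaM_subset_betaLM : betaM G k ⊆ betaLM G k := by
  rintro _ ⟨e, rfl⟩
  exact ⟨_, rfl⟩

lemma mem_betaM_of_adj {v w : BetaVert V G k} (h : (betaGraph G k).Adj v w)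
    (hv : v ∉ betaM G k) : w ∈ betaM G k := by
  rcases v with (a | e) | u <;> rcases w with (b | f) | w <;> simp_all [betaGraph, betaM]

lemma degIn_compl_eq_zero {S : Set (BetaVert V G k)} (hS : betaLM G k ⊆ S)
    {v : BetaVert V G k} (hv : v ∉ betaM G k) : degIn (betaGraph G k) Sᶜ v = 0 := by
  rw [degIn, Set.ncard_eq_zero, Set.eq_empty_iff_forall_notMem]
  rintro w ⟨hwS, hvw⟩
  exact hwS (hS (betaM_subset_betaLM (mem_betaM_of_adj hvw hv)))

lemma degIn_inl_inr (T : Set (BetaVert V G k)) (e : G.edgeSet) {x y : V}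
    (he : (e : Sym2 V) = s(x, y)) :
    degIn (betaGraph G k) T (Sum.inl (Sum.inr e)) =
      ((Sum.inl ∘ Sum.inl) ⁻¹' T).ncard + (Sum.inr ⁻¹' T \ {x, y}).ncard := by
  rw [degIn, Set.ncard_eq_ncard_preimage_inl_add_ncard_preimage_inr,
    Set.ncard_eq_ncard_preimage_inl_add_ncard_preimage_inr (Sum.inl ⁻¹' _)]
  have hM : Sum.inr ⁻¹' (Sum.inl ⁻¹' (T ∩ (betaGraph G k).neighborSet (Sum.inl (Sum.inr e))))
      = ∅ := by
    ext; simp [betaGraph]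
  rw [hM, Set.ncard_empty, add_zero]
  congr 2 <;> ext <;> simp [betaGraph, he, and_comm]

lemma ncard_of_betaLM_subset {S : Set (BetaVert V G k)} (hS : betaLM G k ⊆ S) :
    S.ncard = lsize G k + G.edgeSet.ncard + (Sum.inr ⁻¹' S).ncard := by
  have hLM : Sum.inl ⁻¹' S = Set.univ := Set.eq_univ_of_forall fun z => hS ⟨z, rfl⟩
  rw [Set.ncard_eq_ncard_preimage_inl_add_ncard_preimage_inr, hLM, Set.ncard_univ,
    Nat.card_sum, Nat.card_coe_set_eq, Nat.card_eq_fintype_card, Fintype.card_fin]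

lemma ncard_compl_of_betaLM_subset {S : Set (BetaVert V G k)} (hS : betaLM G k ⊆ S) :
    Sᶜ.ncard = (Sum.inr ⁻¹' S)ᶜ.ncard := by
  have hLM : Sum.inl ⁻¹' Sᶜ = ∅ := Set.eq_empty_of_forall_notMem fun z hz => hz (hS ⟨z, rfl⟩)
  rw [Set.ncard_eq_ncard_preimage_inl_add_ncard_preimage_inr, hLM, Set.ncard_empty, zero_add,
    Set.preimage_compl]

lemma isPDS_iff_forall_edgeSet {S : Set (BetaVert V G k)} (hS : betaLM G k ⊆ S)
    (h2 : 2 ≤ S.ncard) :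
    IsPDS (betaGraph G k) S ↔ S ≠ Set.univ ∧ ∀ e : G.edgeSet,
      degIn (betaGraph G k) Sᶜ (Sum.inl (Sum.inr e)) * (S.ncard - 1) ≤
        degIn (betaGraph G k) S (Sum.inl (Sum.inr e)) * Sᶜ.ncard := by
  rw [IsPDS, Set.ssubset_univ_iff, and_iff_right h2]
  refine and_congr_right fun _ => ⟨fun h e => h _ (hS ⟨_, rfl⟩), fun h u _ => ?_⟩
  by_cases hu : u ∈ betaM G k
  · obtain ⟨e, rfl⟩ := hu
    exact h e
  · rw [degIn_compl_eq_zero hS hu, zero_mul]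
    exact Nat.zero_le _

lemma pds_condition_at_edge_iff {S : Set (BetaVert V G k)} {A : Set V} (hconn : G.Connected)
    (hk : k < Fintype.card V - 1) (hS : betaLM G k ⊆ S) (hA : Sum.inr ⁻¹' S = A) {x y : V}
    (hxy : G.Adj x y) :
    degIn (betaGraph G k) Sᶜ (Sum.inl (Sum.inr ⟨s(x, y), hxy⟩)) * (S.ncard - 1) ≤
        degIn (betaGraph G k) S (Sum.inl (Sum.inr ⟨s(x, y), hxy⟩)) * Sᶜ.ncard ↔
      ((Fintype.card V : ℤ) - A.ncard) * (G.edgeSet.ncard + ({x, y} ∩ A).ncard - 1) ≤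
        (2 - ({x, y} ∩ A).ncard) * (G.edgeSet.ncard * (Fintype.card V - k) + A.ncard - k) := by
  have hL : (Sum.inl ∘ Sum.inl) ⁻¹' S = Set.univ :=
    Set.eq_univ_of_forall fun z => hS ⟨Sum.inl z, rfl⟩
  have hLc : (Sum.inl ∘ Sum.inl) ⁻¹' Sᶜ = ∅ := by rw [Set.preimage_compl, hL, Set.compl_univ]
  rw [degIn_inl_inr _ _ rfl, degIn_inl_inr _ _ rfl, hL, hLc, Set.preimage_compl, hA,
    ncard_of_betaLM_subset hS, ncard_compl_of_betaLM_subset hS, hA, Set.ncard_univ,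
    Nat.card_eq_fintype_card, Fintype.card_fin, Set.ncard_empty, zero_add]
  have hp := Set.ncard_inter_add_ncard_sdiff_eq_ncard A {x, y}
  have hq := Set.ncard_inter_add_ncard_sdiff_eq_ncard Aᶜ {x, y}
  have ht := Set.ncard_inter_add_ncard_sdiff_eq_ncard {x, y} A
  rw [Set.ncard_pair hxy.ne, Set.sdiff_eq_compl_inter] at ht
  rw [Set.inter_comm A] at hp
  have hc := Set.ncard_add_ncard_compl A
  rw [Nat.card_eq_fintype_card] at hc
  have hℓ : 1 ≤ lsize G k := Nat.le_add_left _ _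
  zify [Nat.le_add_right_of_le (Nat.le_add_right_of_le hℓ)] at hp hq ht hc ⊢
  exact pds_edge_inequality_iff (cast_lsize hconn hk) hp hq ht hc

lemma isPDS_iff {S : Set (BetaVert V G k)} {A : Set V} (hconn : G.Connected)
    (hk : k < Fintype.card V - 1) (hS : betaLM G k ⊆ S) (hA : Sum.inr ⁻¹' S = A) :
    IsPDS (betaGraph G k) S ↔ A ≠ Set.univ ∧ ∀ x y, G.Adj x y →
      ((Fintype.card V : ℤ) - A.ncard) * (G.edgeSet.ncard + ({x, y} ∩ A).ncard - 1) ≤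
        (2 - ({x, y} ∩ A).ncard) * (G.edgeSet.ncard * (Fintype.card V - k) + A.ncard - k) := by
  have h2 : 2 ≤ S.ncard := by
    have := hconn.card_le_ncard_edgeSet_add_one
    have : 1 ≤ lsize G k := Nat.le_add_left 1 _
    rw [ncard_of_betaLM_subset hS]
    omega
  rw [isPDS_iff_forall_edgeSet hS h2]
  refine and_congr (not_congr ⟨fun h => by simp [← hA, h], fun h => ?_⟩) ⟨fun h x y hxy =>
    (pds_condition_at_edge_iff hconn hk hS hA hxy).1 (h ⟨s(x, y), hxy⟩), fun h ⟨e, he⟩ => ?_⟩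
  · refine Set.eq_univ_of_forall fun v => ?_
    rcases v with z | u
    · exact hS ⟨z, rfl⟩
    · exact show u ∈ Sum.inr ⁻¹' S by rw [hA, h]; trivial
  · induction e using Sym2.ind with
    | _ x y => exact (pds_condition_at_edge_iff hconn hk hS hA he).2 (h x y he)

lemma pairwise_not_adj_of_isPDS {S : Set (BetaVert V G k)} (hconn : G.Connected)
    (hk : k < Fintype.card V - 1) (hS : betaLM G k ⊆ S) (hPDS : IsPDS (betaGraph G k) S) :
    (Sum.inr ⁻¹' S).Pairwise fun a b => ¬ G.Adj a b := by
  obtain ⟨hAU, hcond⟩ := (isPDS_iff hconn hk hS rfl).1 hPDS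
  intro x hx y hy _ hxy
  have ht : ({x, y} ∩ Sum.inr ⁻¹' S).ncard = 2 := by
    rw [Set.inter_eq_left.2 (Set.insert_subset hx (Set.singleton_subset_iff.2 hy)),
      Set.ncard_pair hxy.ne]
  have ha := Set.ncard_lt_card hAU
  have := hcond x y hxy
  rw [ht] at this
  rw [Nat.card_eq_fintype_card] at ha
  push_cast at this
  nlinarith

lemma le_ncard_of_isPDS {S : Set (BetaVert V G k)} (hconn : G.Connected)
    (hk : k < Fintype.card V - 1) (hS : betaLM G k ⊂ S) (hPDS : IsPDS (betaGraph G k) S) :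
    k ≤ (Sum.inr ⁻¹' S).ncard := by
  obtain ⟨hAU, hcond⟩ := (isPDS_iff hconn hk hS.subset rfl).1 hPDS
  obtain ⟨u, huS, hu⟩ := Set.exists_of_ssubset hS
  obtain ⟨u, rfl⟩ : ∃ x, Sum.inr x = u := by
    rcases u with z | x
    · exact absurd ⟨z, rfl⟩ hu
    · exact ⟨x, rfl⟩
  obtain ⟨v, hv⟩ := (Set.ne_univ_iff_exists_notMem _).1 hAU
  obtain ⟨d, -, hd, hd'⟩ := ((hconn.preconnected u v).some).exists_boundary_dart _ huS hv
  have ht : ({d.fst, d.snd} ∩ Sum.inr ⁻¹' S).ncard = 1 := by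
    rw [Set.insert_inter_of_mem hd, Set.singleton_inter_eq_empty.2 hd', insert_empty_eq,
      Set.ncard_singleton]
  have := hcond _ _ d.adj
  rw [ht] at this
  push_cast at this
  nlinarith

lemma isPDS_of_pairwise_not_adj {A : Set V} (hconn : G.Connected)
    (hk : k < Fintype.card V - 1) (hA : A.Pairwise fun a b => ¬ G.Adj a b) (hAk : A.ncard = k) :
    IsPDS (betaGraph G k) (betaLM G k ∪ Sum.inr '' A) := by
  refine (isPDS_iff (A := A) hconn hk Set.subset_union_left ?_).2 ⟨?_, fun x y hxy => ?_⟩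
  · ext; simp [betaLM]
  · rintro rfl
    rw [Set.ncard_univ, Nat.card_eq_fintype_card] at hAk
    omega
  · have ht : ({x, y} ∩ A).ncard ≤ 1 := by
      rw [Set.ncard_le_one]
      rintro a ⟨ha, haA⟩ b ⟨hb, hbA⟩
      by_contra hab
      rcases ha with rfl | rfl <;> rcases hb with rfl | rfl
      exacts [hab rfl, hA haA hbA hab hxy, hA haA hbA hab hxy.symm, hab rfl]
    have hc : (0 : ℤ) ≤ Fintype.card V - A.ncard := by omega
    have hm : (0 : ℤ) ≤ G.edgeSet.ncard := Nat.cast_nonneg _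
    subst hAk
    interval_cases ({x, y} ∩ A).ncard <;> push_cast <;> nlinarith [mul_nonneg hc hm]

end BetaGraph

theorem beta_extension_correct_general {V : Type*} [Fintype V] (G : SimpleGraph V)
    (hconn : G.Connected)
    (k : ℕ) (hk1 : 1 ≤ k) (hk2 : k < Fintype.card V - 1) :
    (∃ S : Set (BetaVert V G k),
        betaLM G k ⊂ S ∧ S ⊂ Set.univ ∧ IsPDS (betaGraph G k) S)
      ↔ (∃ I : Set V, I.Pairwise (fun a b => ¬ G.Adj a b) ∧ k ≤ I.ncard) := by
  constructor
  · rintro ⟨S, hLM, -, hPDS⟩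
    exact ⟨_, pairwise_not_adj_of_isPDS hconn hk2 hLM.subset hPDS,
      le_ncard_of_isPDS hconn hk2 hLM hPDS⟩
  · rintro ⟨I, hI, hIk⟩
    obtain ⟨A, hAI, hAk⟩ := Set.exists_subset_card_eq hIk
    have hPDS := isPDS_of_pairwise_not_adj hconn hk2 (Set.Pairwise.mono hAI hI) hAk
    refine ⟨_, Set.ssubset_union_left_iff.2 fun hA => ?_, hPDS.1, hPDS⟩
    obtain ⟨v, hv⟩ := Set.nonempty_of_ncard_ne_zero (by omega : A.ncard ≠ 0)
    obtain ⟨z, hz⟩ := hA ⟨v, hv, rfl⟩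
    cases hz

/-- Theorem 3 of the paper (PDS extension): `L ∪ M` extends to a proper superset
`S ⊊ V'` inducing a PDS of `β(G,k)` iff `G` has an independent set of size at
least `k`. -/
theorem beta_extension_correct {V : Type*} [Fintype V] (G : SimpleGraph V)
    (hconn : G.Connected) (hstar : ¬ IsStar G)
    (k : ℕ) (hk1 : 1 ≤ k) (hk2 : k < Fintype.card V - 1) :
    (∃ S : Set (BetaVert V G k),
        betaLM G k ⊂ S ∧ S ⊂ Set.univ ∧ IsPDS (betaGraph G k) S)
      ↔ (∃ I : Set V, I.Pairwise (fun a b => ¬ G.Adj a b) ∧ k ≤ I.ncard) :=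
  beta_extension_correct_general G hconn k hk1 hk2
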